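/- Let X = [0,1]^d, (u^n)_{n≥0} a (t,d)-sequence in base b ≥ 2, and K : X → P(X) a Markov kernel satisfying Assumptions A1 and A2 such that F_K, viewed as a function of (x,y) ∈ X², is Lipschitz for the supremum norm. For k ≥ t and x̃ ∈ X define the dispersion d_X(k, x̃) = sup_{x∈X} min_{0 ≤ n < b^k} ‖F_K^{-1}(x̃, u^n) − x‖_∞. Then there exist a constant C < ∞ and k_0 ∈ ℕ such that sup_{x̃∈X} d_X(k, x̃) ≤ C b^{-k/d} for all k ≥ k_0. -/

import Mathlib

open MeasureTheory ProbabilityTheory Set Filter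
open scoped Classical

/-- The closed unit cube `[0,1]^d` in `ℝ^d` (modeled as `Fin d → ℝ` with the sup norm). -/
def cube (d : ℕ) : Set (Fin d → ℝ) := {x | ∀ i, x i ∈ Set.Icc (0:ℝ) 1}

/-- Membership in the `b`-ary box `∏_j [c_j b^{-e_j}, (c_j+1) b^{-e_j})`. -/
def inBaryBox {d : ℕ} (b : ℕ) (e c : Fin d → ℕ) (x : Fin d → ℝ) : Prop :=
  ∀ j, (c j : ℝ) / (b : ℝ) ^ (e j) ≤ x j ∧ x j < ((c j : ℝ) + 1) / (b : ℝ) ^ (e j)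

/-- The block `{u^n : A ≤ n < A + b^m}` is a `(t,m,d)`-net in base `b`: every `b`-ary box of
volume `b^{t-m}` contains exactly `b^t` points of the block. -/
def IsNetBlock {d : ℕ} (b t m : ℕ) (u : ℕ → Fin d → ℝ) (A : ℕ) : Prop :=
  ∀ e c : Fin d → ℕ, (∀ j, c j < b ^ (e j)) → (∑ j, e j) = m - t →
    ((Finset.Ico A (A + b ^ m)).filter (fun n => inBaryBox b e c (u n))).card = b ^ t

/-- `(u^n)_{n≥0}` is a `(t,d)`-sequence in base `b`. -/
def IsTSeq {d : ℕ} (b t : ℕ) (u : ℕ → Fin d → ℝ) : Prop :=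
  (∀ n i, u n i ∈ Set.Ico (0:ℝ) 1) ∧
  ∀ a m : ℕ, t ≤ m → IsNetBlock b t m u (a * b ^ m)

/-- `(v^n)_{n≥0}` is a scalar `(t,1)`-sequence in base `b`. -/
def IsTSeq1 (b t : ℕ) (v : ℕ → ℝ) : Prop :=
  (∀ n, v n ∈ Set.Ico (0:ℝ) 1) ∧
  ∀ a m : ℕ, t ≤ m → ∀ c : ℕ, c < b ^ (m - t) →
    ((Finset.Ico (a * b ^ m) (a * b ^ m + b ^ m)).filter
      (fun n => (c : ℝ) / (b:ℝ) ^ (m - t) ≤ v n ∧ v n < ((c : ℝ) + 1) / (b:ℝ) ^ (m - t))).card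
      = b ^ t

/-- `k_n`: the smallest integer `k` such that `n < b^k`. -/
noncomputable def kOf (b n : ℕ) : ℕ := sInf {k | n < b ^ k}

section Rosenblatt

variable {d : ℕ}

/-- Marginal of the density `κ(·|x)` over the first `i` coordinates: the first `i` coordinates
are fixed to those of `y`, the remaining ones are integrated out over the unit cube. -/
noncomputable def marg (κ : (Fin d → ℝ) → (Fin d → ℝ) → ℝ) (i : ℕ) (x y : Fin d → ℝ) : ℝ :=
  ∫ z in cube d, κ x (fun j => if (j : ℕ) < i then y j else z j)

/-- `K_i(y_i | y_{1:i-1}, x)`: the `i`-th conditional density of the kernel density `κ`. -/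
noncomputable def condDensity (κ : (Fin d → ℝ) → (Fin d → ℝ) → ℝ) (i : Fin d)
    (x y : Fin d → ℝ) : ℝ :=
  marg κ ((i : ℕ) + 1) x y / marg κ (i : ℕ) x y

/-- `F_{K_i}(s | x, y_{1:i-1})`: the `i`-th conditional CDF of the kernel density `κ`. -/
noncomputable def condCDF' (κ : (Fin d → ℝ) → (Fin d → ℝ) → ℝ) (i : Fin d)
    (x y : Fin d → ℝ) (s : ℝ) : ℝ :=
  ∫ r in (0:ℝ)..s, condDensity κ i x (Function.update y i r)

/-- The Rosenblatt transform `F_K(x,·)` of the kernel with density `κ`. -/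
noncomputable def Ros (κ : (Fin d → ℝ) → (Fin d → ℝ) → ℝ) (x y : Fin d → ℝ) : Fin d → ℝ :=
  fun i => condCDF' κ i x y (y i)

/-- Assumption (A1): each conditional CDF is strictly increasing in its main argument. -/
def A1 (κ : (Fin d → ℝ) → (Fin d → ℝ) → ℝ) : Prop :=
  ∀ x ∈ cube d, ∀ y ∈ cube d, ∀ i : Fin d,
    StrictMonoOn (fun s => condCDF' κ i x y s) (Set.Icc (0:ℝ) 1)

/-- Assumption (A2): the density `κ` is continuous on `X²` and bounded below by `Klow > 0`. -/
def A2 (κ : (Fin d → ℝ) → (Fin d → ℝ) → ℝ) (Klow : ℝ) : Prop :=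
  ContinuousOn (fun p : (Fin d → ℝ) × (Fin d → ℝ) => κ p.1 p.2) ((cube d) ×ˢ (cube d)) ∧
  0 < Klow ∧ ∀ x ∈ cube d, ∀ y ∈ cube d, Klow ≤ κ x y

/-- `κ` is a probability density in its second argument, w.r.t. Lebesgue measure on the cube. -/
def IsMarkovDensity (κ : (Fin d → ℝ) → (Fin d → ℝ) → ℝ) : Prop :=
  ∀ x ∈ cube d, (∀ y ∈ cube d, 0 ≤ κ x y) ∧ ∫ y in cube d, κ x y = 1

/-- `G` is the inverse Rosenblatt transform associated with `κ`. -/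
def IsInvRos (κ : (Fin d → ℝ) → (Fin d → ℝ) → ℝ)
    (G : (Fin d → ℝ) → (Fin d → ℝ) → (Fin d → ℝ)) : Prop :=
  ∀ x ∈ cube d, ∀ u : Fin d → ℝ, (∀ i, u i ∈ Set.Icc (0:ℝ) 1) →
    G x u ∈ cube d ∧ Ros κ x (G x u) = u

/-- The sup-norm ball `B_δ(x)` of radius `δ` around `x`, intersected with the cube. -/
def ball' {d : ℕ} (δ : ℝ) (x : Fin d → ℝ) : Set (Fin d → ℝ) :=
  {y ∈ cube d | ‖y - x‖ ≤ δ}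

end Rosenblatt


/-!
By compactness and (A2), `Klow ≤ κ ≤ M`, so every marginal lies in `[Klow, M]` and every
conditional density is at least `Klow / M`: each conditional CDF expands distances by that factor.
Since the `i`-th coordinate of `F_K(x, ·)` only depends on `y_{1:i}`, this expansion combined with
the Lipschitz bound makes `F_K(x, ·)` inverse Lipschitz on the cube, with constant
`(1 + CK M / Klow) ^ d M / Klow`, by induction over the coordinates. Given `x̃` and `x`, the point
`F_K(x̃, x)` lies in `[0,1]^d` (the conditional CDFs end at `1` by Fubini), and the first `b ^ k`
points of the `(t,d)`-sequence contain one within `b ^ (-⌊(k - t) / d⌋)` of it; its image under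
`F_K^{-1}(x̃, ·)` is then within `C b ^ (-k / d)` of `x`.
-/

section Cube

variable {d : ℕ}

lemma cube_eq_pi (d : ℕ) : cube d = Set.pi univ fun _ : Fin d => Icc (0:ℝ) 1 := by
  ext x; simp [cube, Pi.le_def, forall_and]

lemma isCompact_cube : IsCompact (cube d) := by
  rw [cube_eq_pi]; exact isCompact_univ_pi fun _ => isCompact_Icc

lemma measurableSet_cube : MeasurableSet (cube d) := by
  rw [cube_eq_pi]; exact MeasurableSet.univ_pi fun _ => measurableSet_Icc

lemma volume_cube : volume (cube d) = 1 := by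
  rw [cube_eq_pi, volume_pi_pi]; simp

lemma setIntegral_cube_const (c : ℝ) : ∫ _ in cube d, c = c := by
  simp [measureReal_def, volume_cube]

lemma integrableOn_cube_const (c : ℝ) : IntegrableOn (fun _ => c) (cube d) :=
  integrableOn_const (by simp [volume_cube])

lemma update_mem_cube {y : Fin d → ℝ} (hy : y ∈ cube d) (i : Fin d) {r : ℝ}
    (hr : r ∈ Icc (0:ℝ) 1) : Function.update y i r ∈ cube d := by
  intro j
  rcases eq_or_ne j i with rfl | h
  · simpa using hr
  · simpa [Function.update_of_ne h] using hy j

lemma insertNth_mem_cube_iff {n : ℕ} (i : Fin (n + 1)) {r : ℝ} {z : Fin n → ℝ} :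
    i.insertNth r z ∈ cube (n + 1) ↔ r ∈ Icc (0:ℝ) 1 ∧ z ∈ cube n := by
  simp only [cube, mem_ofPred_eq, Fin.forall_iff_succAbove i, Fin.insertNth_apply_same,
    Fin.insertNth_apply_succAbove]

lemma setIntegral_cube_succ {n : ℕ} (i : Fin (n + 1)) {f : (Fin (n + 1) → ℝ) → ℝ}
    (hf : ContinuousOn f (cube (n + 1))) :
    ∫ z in cube (n + 1), f z = ∫ r in Icc (0:ℝ) 1, ∫ z in cube n, f (i.insertNth r z) := by
  let e := MeasurableEquiv.piFinSuccAbove (fun _ : Fin (n + 1) => ℝ) i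
  have he : MeasurePreserving e.symm volume volume :=
    (volume_preserving_piFinSuccAbove (fun _ : Fin (n + 1) => ℝ) i).symm
  have hpre : e.symm ⁻¹' cube (n + 1) = Icc (0:ℝ) 1 ×ˢ cube n := by
    ext p; exact insertNth_mem_cube_iff i
  have hint : IntegrableOn (fun p : ℝ × (Fin n → ℝ) => f (i.insertNth p.1 p.2))
      (Icc (0:ℝ) 1 ×ˢ cube n) (volume.prod volume) := by
    rw [← Measure.volume_eq_prod]
    refine ContinuousOn.integrableOn_compact (isCompact_Icc.prod isCompact_cube) ?_
    exact hf.comp (by fun_prop) fun p hp => (insertNth_mem_cube_iff i).2 hp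
  rw [← he.setIntegral_preimage_emb e.symm.measurableEmbedding, hpre, Measure.volume_eq_prod]
  exact setIntegral_prod _ hint

-- Fubini over the `i`-th coordinate: the inner integral does not depend on `z i`.
lemma integral_integral_update_cube {n : ℕ} (i : Fin (n + 1)) {f : (Fin (n + 1) → ℝ) → ℝ}
    (hf : ContinuousOn f (cube (n + 1))) :
    ∫ r in (0:ℝ)..1, ∫ z in cube (n + 1), f (Function.update z i r)
      = ∫ z in cube (n + 1), f z := by
  have hinner : ∀ r ∈ Icc (0:ℝ) 1,
      ∫ z in cube (n + 1), f (Function.update z i r) = ∫ z in cube n, f (i.insertNth r z) := by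
    intro r hr
    have hfr : ContinuousOn (fun w => f (Function.update w i r)) (cube (n + 1)) :=
      hf.comp (by fun_prop) fun w hw => update_mem_cube hw i hr
    rw [setIntegral_cube_succ i hfr]
    simp_rw [Fin.update_insertNth]
    simp [measureReal_def]
  rw [intervalIntegral.integral_of_le zero_le_one, ← integral_Icc_eq_integral_Ioc,
    setIntegral_congr_fun measurableSet_Icc hinner, setIntegral_cube_succ i hf]

end Cube

section Marginals

variable {d : ℕ} {κ : (Fin d → ℝ) → (Fin d → ℝ) → ℝ} {Klow M : ℝ}

def splice (i : ℕ) (y z : Fin d → ℝ) : Fin d → ℝ := fun j => if (j : ℕ) < i then y j else z j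

lemma marg_eq_integral_splice (κ : (Fin d → ℝ) → (Fin d → ℝ) → ℝ) (i : ℕ) (x y : Fin d → ℝ) :
    marg κ i x y = ∫ z in cube d, κ x (splice i y z) := rfl

lemma splice_mem_cube {i : ℕ} {y z : Fin d → ℝ} (hy : y ∈ cube d) (hz : z ∈ cube d) :
    splice i y z ∈ cube d := by
  intro j; unfold splice; split_ifs; exacts [hy j, hz j]

lemma continuous_splice (i : ℕ) (y : Fin d → ℝ) : Continuous (splice i y) :=
  continuous_pi fun j => by unfold splice; split_ifs <;> fun_prop

lemma splice_succ_update (i : Fin d) (y z : Fin d → ℝ) (r : ℝ) :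
    splice (i + 1) (Function.update y i r) z = splice i y (Function.update z i r) := by
  funext j
  rcases eq_or_ne j i with rfl | hne
  · simp [splice]
  · have : (j : ℕ) ≠ i := Fin.val_ne_of_ne hne
    by_cases hj : (j : ℕ) < i
    · simp [splice, hj, Nat.lt_succ_of_lt hj, hne]
    · simp [splice, hj, show ¬ (j : ℕ) < i + 1 by omega, hne]

lemma marg_congr {i : ℕ} {x y y' : Fin d → ℝ} (h : ∀ j : Fin d, (j : ℕ) < i → y j = y' j) :
    marg κ i x y = marg κ i x y' := by
  refine setIntegral_congr_fun measurableSet_cube fun z _ => congrArg (κ x) (funext fun j => ?_)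
  by_cases hj : (j : ℕ) < i <;> simp [hj, h j]

lemma A2.exists_bound (hA2 : A2 κ Klow) : ∃ M, ∀ x ∈ cube d, ∀ y ∈ cube d, κ x y ≤ M := by
  obtain ⟨M, hM⟩ := (isCompact_cube.prod isCompact_cube).exists_bound_of_continuousOn hA2.1
  exact ⟨M, fun x hx y hy => (le_abs_self _).trans (hM (x, y) ⟨hx, hy⟩)⟩

lemma A2.pos_of_forall_le (hA2 : A2 κ Klow) (hM : ∀ x ∈ cube d, ∀ y ∈ cube d, κ x y ≤ M) :
    0 < M := by
  have h0 : (0 : Fin d → ℝ) ∈ cube d := fun _ => by simp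
  exact hA2.2.1.trans_le ((hA2.2.2 0 h0 0 h0).trans (hM 0 h0 0 h0))

lemma A2.continuousOn_splice (hA2 : A2 κ Klow) {i : ℕ} {x y : Fin d → ℝ} (hx : x ∈ cube d)
    (hy : y ∈ cube d) : ContinuousOn (fun z => κ x (splice i y z)) (cube d) :=
  hA2.1.comp (continuous_const.prodMk (continuous_splice i y)).continuousOn
    fun _ hz => ⟨hx, splice_mem_cube hy hz⟩

lemma A2.le_marg (hA2 : A2 κ Klow) {i : ℕ} {x y : Fin d → ℝ} (hx : x ∈ cube d)
    (hy : y ∈ cube d) : Klow ≤ marg κ i x y := by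
  rw [marg_eq_integral_splice, ← setIntegral_cube_const (d := d) Klow]
  exact setIntegral_mono_on (integrableOn_cube_const _)
    ((hA2.continuousOn_splice hx hy).integrableOn_compact isCompact_cube) measurableSet_cube
    fun z hz => hA2.2.2 x hx _ (splice_mem_cube hy hz)

lemma A2.marg_le (hA2 : A2 κ Klow) (hM : ∀ x ∈ cube d, ∀ y ∈ cube d, κ x y ≤ M) {i : ℕ}
    {x y : Fin d → ℝ} (hx : x ∈ cube d) (hy : y ∈ cube d) : marg κ i x y ≤ M := by
  rw [marg_eq_integral_splice, ← setIntegral_cube_const (d := d) M]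
  exact setIntegral_mono_on ((hA2.continuousOn_splice hx hy).integrableOn_compact isCompact_cube)
    (integrableOn_cube_const _) measurableSet_cube fun z hz => hM x hx _ (splice_mem_cube hy hz)

lemma A2.continuousOn_marg_update (hA2 : A2 κ Klow) (hM : ∀ x ∈ cube d, ∀ y ∈ cube d, κ x y ≤ M)
    {i : ℕ} (j : Fin d) {x y : Fin d → ℝ} (hx : x ∈ cube d) (hy : y ∈ cube d) :
    ContinuousOn (fun r => marg κ i x (Function.update y j r)) (Icc (0:ℝ) 1) := by
  have hmem : ∀ r ∈ Icc (0:ℝ) 1, ∀ z ∈ cube d, splice i (Function.update y j r) z ∈ cube d :=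
    fun r hr z hz => splice_mem_cube (update_mem_cube hy j hr) hz
  simp only [marg_eq_integral_splice]
  refine continuousOn_of_dominated (bound := fun _ => M) (fun r hr => ?_) (fun r hr => ?_)
    (integrableOn_cube_const M) ?_
  · exact (hA2.continuousOn_splice hx (update_mem_cube hy j hr)).aestronglyMeasurable
      measurableSet_cube
  · refine (ae_restrict_iff' measurableSet_cube).2 (ae_of_all _ fun z hz => ?_)
    have hpos := hA2.2.1.trans_le (hA2.2.2 x hx _ (hmem r hr z hz))
    rw [Real.norm_of_nonneg hpos.le]
    exact hM x hx _ (hmem r hr z hz)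
  · refine (ae_restrict_iff' measurableSet_cube).2 (ae_of_all _ fun z hz => ?_)
    have hcont : Continuous fun r => splice i (Function.update y j r) z :=
      continuous_pi fun l => by unfold splice; split_ifs <;> fun_prop
    exact hA2.1.comp (continuous_const.prodMk hcont).continuousOn fun r hr => ⟨hx, hmem r hr z hz⟩

end Marginals

section ConditionalCDF

variable {d : ℕ} {κ : (Fin d → ℝ) → (Fin d → ℝ) → ℝ} {Klow M : ℝ} {i : Fin d} {x y : Fin d → ℝ}

lemma condDensity_update (i : Fin d) (x y : Fin d → ℝ) (r : ℝ) :
    condDensity κ i x (Function.update y i r)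
      = marg κ (i + 1) x (Function.update y i r) / marg κ i x y := by
  rw [condDensity, marg_congr (y' := y) fun j hj => Function.update_of_ne (Fin.ne_of_lt hj) _ _]

lemma condCDF'_zero (i : Fin d) (x y : Fin d → ℝ) : condCDF' κ i x y 0 = 0 :=
  intervalIntegral.integral_same

lemma condCDF'_congr {y' : Fin d → ℝ} (h : ∀ j : Fin d, (j : ℕ) < i → y j = y' j) (s : ℝ) :
    condCDF' κ i x y s = condCDF' κ i x y' s := by
  refine intervalIntegral.integral_congr fun r _ => ?_
  have hupd : ∀ j : Fin d, (j : ℕ) < i + 1 →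
      Function.update y i r j = Function.update y' i r j := by
    intro j hj
    rcases eq_or_ne j i with rfl | hne
    · simp
    · simp only [Function.update_of_ne hne]
      exact h j (lt_of_le_of_ne (Nat.lt_succ_iff.1 hj) (Fin.val_ne_of_ne hne))
  simp only [condDensity_update, marg_congr hupd, marg_congr h]

variable (hA2 : A2 κ Klow) (hM : ∀ x ∈ cube d, ∀ y ∈ cube d, κ x y ≤ M)
  (hx : x ∈ cube d) (hy : y ∈ cube d)
include hA2 hM hx hy

lemma A2.div_le_condDensity : Klow / M ≤ condDensity κ i x y := by
  have hmarg := hA2.2.1.trans_le (hA2.le_marg (i := i) hx hy)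
  rw [condDensity, div_le_div_iff₀ (hA2.pos_of_forall_le hM) hmarg]
  exact mul_le_mul (hA2.le_marg hx hy) (hA2.marg_le hM hx hy) hmarg.le
    (hA2.2.1.le.trans (hA2.le_marg hx hy))

lemma A2.intervalIntegrable_condDensity_update {s s' : ℝ} (hs : s ∈ Icc (0:ℝ) 1)
    (hs' : s' ∈ Icc (0:ℝ) 1) :
    IntervalIntegrable (fun r => condDensity κ i x (Function.update y i r)) volume s s' := by
  have hcont := (hA2.continuousOn_marg_update hM (i := i + 1) i hx hy).div_const (marg κ i x y)
  simp only [← condDensity_update] at hcont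
  exact (hcont.mono (uIcc_subset_Icc hs hs')).intervalIntegrable

lemma A2.mul_sub_le_condCDF'_sub {s s' : ℝ} (hs' : s' ∈ Icc (0:ℝ) 1) (hs : s ∈ Icc (0:ℝ) 1)
    (hss : s' ≤ s) : Klow / M * (s - s') ≤ condCDF' κ i x y s - condCDF' κ i x y s' := by
  have h0 : (0:ℝ) ∈ Icc (0:ℝ) 1 := by simp
  rw [condCDF', condCDF', intervalIntegral.integral_interval_sub_left
    (hA2.intervalIntegrable_condDensity_update hM hx hy h0 hs)
    (hA2.intervalIntegrable_condDensity_update hM hx hy h0 hs')]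
  calc Klow / M * (s - s') = ∫ _ in s'..s, Klow / M := by simp [mul_comm, mul_div_right_comm]
    _ ≤ _ := intervalIntegral.integral_mono_on hss intervalIntegrable_const
        (hA2.intervalIntegrable_condDensity_update hM hx hy hs' hs) fun r hr =>
          hA2.div_le_condDensity hM hx (update_mem_cube hy i ⟨hs'.1.trans hr.1, hr.2.trans hs.2⟩)

lemma A2.condCDF'_one : condCDF' κ i x y 1 = 1 := by
  obtain ⟨n, rfl⟩ : ∃ n, d = n + 1 := Nat.exists_eq_succ_of_ne_zero i.pos.ne'
  have hmarg : ∫ r in (0:ℝ)..1, marg κ (i + 1) x (Function.update y i r) = marg κ i x y := by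
    simp only [marg_eq_integral_splice, splice_succ_update]
    exact integral_integral_update_cube i (hA2.continuousOn_splice hx hy)
  rw [condCDF', intervalIntegral.integral_congr fun r _ => condDensity_update i x y r,
    intervalIntegral.integral_div, hmarg, div_self (hA2.2.1.trans_le (hA2.le_marg hx hy)).ne']

lemma A2.condCDF'_mem_Icc {s : ℝ} (hs : s ∈ Icc (0:ℝ) 1) :
    condCDF' κ i x y s ∈ Icc (0:ℝ) 1 := by
  have hρ : 0 < Klow / M := div_pos hA2.2.1 (hA2.pos_of_forall_le hM)
  have h0 := hA2.mul_sub_le_condCDF'_sub hM (i := i) hx hy (by simp) hs hs.1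
  have h1 := hA2.mul_sub_le_condCDF'_sub hM (i := i) hx hy hs (by simp) hs.2
  rw [condCDF'_zero] at h0
  rw [hA2.condCDF'_one hM hx hy] at h1
  constructor <;> nlinarith [hs.1, hs.2]

end ConditionalCDF

section Triangular

variable {d : ℕ} {R : (Fin d → ℝ) → Fin d → ℝ} {ρ L : ℝ} (hρ : 0 < ρ) (hL : 0 ≤ L)
  (hlip : ∀ y ∈ cube d, ∀ y' ∈ cube d, ‖R y - R y'‖ ≤ L * ‖y - y'‖)
  (hexp : ∀ y ∈ cube d, ∀ y' ∈ cube d, ∀ i : Fin d, (∀ j : Fin d, (j : ℕ) < i → y j = y' j) →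
    ρ * |y i - y' i| ≤ |R y i - R y' i|)
include hρ hL hlip hexp

lemma abs_sub_le_of_triangular {y y' : Fin d → ℝ} (hy : y ∈ cube d) (hy' : y' ∈ cube d)
    (i : Fin d) :
    |y i - y' i| ≤ (1 + L / ρ) ^ ((i : ℕ) + 1) / ρ * ‖R y - R y'‖ := by
  set ε := ‖R y - R y'‖
  have ha : 1 ≤ 1 + L / ρ := le_add_of_nonneg_right (div_nonneg hL hρ.le)
  induction i using WellFoundedLT.induction with
  | _ i ih =>
  -- Compare through the hybrid point `y''`, which agrees with `y` before `i` and with `y'` after.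
  set y'' := splice i y y'
  have hB : ‖y' - y''‖ ≤ (1 + L / ρ) ^ (i : ℕ) / ρ * ε := by
    refine (pi_norm_le_iff_of_nonneg (by positivity)).2 fun j => ?_
    rw [Pi.sub_apply, Real.norm_eq_abs]
    by_cases hj : (j : ℕ) < i
    · simp only [y'', splice, hj, if_true, abs_sub_comm]
      refine (ih j hj).trans (mul_le_mul_of_nonneg_right ?_ (norm_nonneg _))
      exact div_le_div_of_nonneg_right (pow_le_pow_right₀ ha hj) hρ.le
    · simp only [y'', splice, hj, if_false, sub_self, abs_zero]
      positivity
  have hexp_i : ρ * |y i - y' i| ≤ |R y i - R y'' i| := by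
    simpa [y'', splice] using
      hexp y hy y'' (splice_mem_cube hy hy') i fun j hj => by simp [y'', splice, hj]
  have hstep : ρ * |y i - y' i| ≤ ε + L * ((1 + L / ρ) ^ (i : ℕ) / ρ * ε) :=
    calc ρ * |y i - y' i| ≤ |R y i - R y'' i| := hexp_i
      _ ≤ |R y i - R y' i| + |R y' i - R y'' i| := abs_sub_le _ _ _
      _ ≤ ε + ‖R y' - R y''‖ := by
        gcongr
        · simpa only [Pi.sub_apply, Real.norm_eq_abs] using norm_le_pi_norm (R y - R y') i
        · simpa only [Pi.sub_apply, Real.norm_eq_abs] using norm_le_pi_norm (R y' - R y'') i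
      _ ≤ ε + L * ((1 + L / ρ) ^ (i : ℕ) / ρ * ε) := by
        gcongr; exact (hlip y' hy' y'' (splice_mem_cube hy hy')).trans (by gcongr)
  have hε : ε ≤ (1 + L / ρ) ^ (i : ℕ) * ε := le_mul_of_one_le_left (norm_nonneg _) (one_le_pow₀ ha)
  refine le_of_mul_le_mul_left (hstep.trans ?_) hρ
  have hexpand : ρ * ((1 + L / ρ) ^ ((i : ℕ) + 1) / ρ * ε)
      = (1 + L / ρ) ^ (i : ℕ) * ε + L * ((1 + L / ρ) ^ (i : ℕ) / ρ * ε) := by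
    have := hρ.ne'
    rw [pow_succ]
    field_simp
  linarith

lemma norm_sub_le_of_triangular {y y' : Fin d → ℝ} (hy : y ∈ cube d) (hy' : y' ∈ cube d) :
    ‖y - y'‖ ≤ (1 + L / ρ) ^ d / ρ * ‖R y - R y'‖ := by
  have ha : 1 ≤ 1 + L / ρ := le_add_of_nonneg_right (div_nonneg hL hρ.le)
  refine (pi_norm_le_iff_of_nonneg (by positivity)).2 fun i => ?_
  rw [Pi.sub_apply, Real.norm_eq_abs]
  refine (abs_sub_le_of_triangular hρ hL hlip hexp hy hy' i).trans ?_
  gcongr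
  exact i.isLt

end Triangular

section InverseLipschitz

variable {d : ℕ} {κ : (Fin d → ℝ) → (Fin d → ℝ) → ℝ} {Klow M : ℝ} {x : Fin d → ℝ}
  (hA2 : A2 κ Klow) (hM : ∀ x ∈ cube d, ∀ y ∈ cube d, κ x y ≤ M) (hx : x ∈ cube d)
include hA2 hM hx

lemma A2.Ros_mem_cube {y : Fin d → ℝ} (hy : y ∈ cube d) : Ros κ x y ∈ cube d :=
  fun i => hA2.condCDF'_mem_Icc hM hx hy (hy i)

lemma A2.mul_abs_sub_le_abs_Ros_sub {y y' : Fin d → ℝ} (hy : y ∈ cube d) (hy' : y' ∈ cube d)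
    (i : Fin d) (h : ∀ j : Fin d, (j : ℕ) < i → y j = y' j) :
    Klow / M * |y i - y' i| ≤ |Ros κ x y i - Ros κ x y' i| := by
  simp only [Ros]
  rw [← condCDF'_congr h]
  rcases le_total (y' i) (y i) with hle | hle
  · rw [abs_of_nonneg (sub_nonneg.2 hle)]
    exact (hA2.mul_sub_le_condCDF'_sub hM hx hy (hy' i) (hy i) hle).trans (le_abs_self _)
  · rw [abs_sub_comm, abs_of_nonneg (sub_nonneg.2 hle), abs_sub_comm]
    exact (hA2.mul_sub_le_condCDF'_sub hM hx hy (hy i) (hy' i) hle).trans (le_abs_self _)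

lemma A2.norm_sub_le_norm_Ros_sub {CK : ℝ} (hCK : 0 ≤ CK)
    (hlip : ∀ y ∈ cube d, ∀ y' ∈ cube d, ‖Ros κ x y - Ros κ x y'‖ ≤ CK * ‖y - y'‖)
    {y y' : Fin d → ℝ} (hy : y ∈ cube d) (hy' : y' ∈ cube d) :
    ‖y - y'‖ ≤ (1 + CK / (Klow / M)) ^ d / (Klow / M) * ‖Ros κ x y - Ros κ x y'‖ :=
  norm_sub_le_of_triangular (div_pos hA2.2.1 (hA2.pos_of_forall_le hM)) hCK hlip
    (fun _ hy _ hy' i h => hA2.mul_abs_sub_le_abs_Ros_sub hM hx hy hy' i h) hy hy'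

end InverseLipschitz

section Nets

lemma exists_sum_eq_forall_div_le {d : ℕ} (hd : 0 < d) (m : ℕ) :
    ∃ e : Fin d → ℕ, ∑ j, e j = m ∧ ∀ j, m / d ≤ e j := by
  refine ⟨fun j => m / d + if (j : ℕ) < m % d then 1 else 0, ?_, fun j => Nat.le_add_right _ _⟩
  rw [Finset.sum_add_distrib, Finset.sum_const, Finset.card_univ, Fintype.card_fin, smul_eq_mul,
    Finset.sum_boole, Fin.card_filter_val_lt, min_eq_right (Nat.mod_lt m hd).le]
  simpa [mul_comm] using Nat.div_add_mod m d

lemma exists_lt_div_le_le_succ_div {N : ℕ} (hN : 0 < N) {v : ℝ} (hv : v ∈ Icc (0:ℝ) 1) :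
    ∃ c < N, (c : ℝ) / N ≤ v ∧ v ≤ (c + 1) / N := by
  have hN' : (0:ℝ) < N := Nat.cast_pos.2 hN
  have hvN : 0 ≤ v * N := mul_nonneg hv.1 hN'.le
  refine ⟨min ⌊v * N⌋₊ (N - 1), by omega, ?_, ?_⟩
  · rw [div_le_iff₀ hN']
    exact (Nat.cast_le.2 (min_le_left _ _)).trans (Nat.floor_le hvN)
  · rw [le_div_iff₀ hN']
    rcases le_total ⌊v * N⌋₊ (N - 1) with h | h
    · rw [min_eq_left h]
      exact (Nat.lt_floor_add_one _).le
    · rw [min_eq_right h, Nat.cast_sub hN, Nat.cast_one, sub_add_cancel]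
      exact mul_le_of_le_one_left hN'.le hv.2

lemma IsNetBlock.exists_mem {d b t m A : ℕ} {u : ℕ → Fin d → ℝ} (h : IsNetBlock b t m u A)
    (hb : 0 < b) {e c : Fin d → ℕ} (hc : ∀ j, c j < b ^ e j) (he : ∑ j, e j = m - t) :
    ∃ n ∈ Finset.Ico A (A + b ^ m), inBaryBox b e c (u n) := by
  have hcard := h e c hc he
  obtain ⟨n, hn⟩ := Finset.card_pos.1 (hcard ▸ Nat.pow_pos hb)
  exact ⟨n, (Finset.mem_filter.1 hn).1, (Finset.mem_filter.1 hn).2⟩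

-- `v` lies in the closure of a `b`-ary box of volume `b ^ (t - k)` whose sides are all at most
-- `b ^ (-⌊(k - t) / d⌋)`, and the first `b ^ k` points form a `(t, k, d)`-net.
lemma IsTSeq.exists_norm_sub_le {d b t : ℕ} (hd : 0 < d) (hb : 0 < b) {u : ℕ → Fin d → ℝ}
    (hu : IsTSeq b t u) {k : ℕ} (hk : t ≤ k) {v : Fin d → ℝ} (hv : v ∈ cube d) :
    ∃ n < b ^ k, ‖u n - v‖ ≤ 1 / (b : ℝ) ^ ((k - t) / d) := by
  obtain ⟨e, he, hqe⟩ := exists_sum_eq_forall_div_le hd (k - t)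
  choose c hc hcv using fun j => exists_lt_div_le_le_succ_div (Nat.pow_pos (n := e j) hb) (hv j)
  obtain ⟨n, hn, hbox⟩ := (hu.2 0 k hk).exists_mem hb hc he
  refine ⟨n, by simpa using hn, (pi_norm_le_iff_of_nonneg (by positivity)).2 fun j => ?_⟩
  have hwidth : (c j + 1 : ℝ) / (b : ℝ) ^ e j - c j / (b : ℝ) ^ e j = 1 / (b : ℝ) ^ e j := by ring
  have hle : 1 / (b : ℝ) ^ e j ≤ 1 / (b : ℝ) ^ ((k - t) / d) :=
    one_div_pow_le_one_div_pow_of_le (by exact_mod_cast hb) (hqe j)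
  push_cast at hcv
  rw [Pi.sub_apply, Real.norm_eq_abs, abs_sub_le_iff]
  constructor <;> linarith [hbox j, hcv j]

end Nets

lemma one_div_pow_div_le_rpow {b : ℝ} (hb : 1 ≤ b) {d t k : ℕ} (hd : 0 < d) (hk : t ≤ k) :
    1 / b ^ ((k - t) / d) ≤ b ^ (((t : ℝ) + d) / d) * b ^ (-(k : ℝ) / d) := by
  have hdR : (0:ℝ) < d := Nat.cast_pos.2 hd
  have hdiv : ((k - t : ℕ) : ℝ) = d * ((k - t) / d : ℕ) + ((k - t) % d : ℕ) := by
    exact_mod_cast (Nat.div_add_mod (k - t) d).symm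
  have hmod : (((k - t) % d : ℕ) : ℝ) < d := Nat.cast_lt.2 (Nat.mod_lt _ hd)
  rw [Nat.cast_sub hk] at hdiv
  rw [← Real.rpow_add (by linarith), one_div, ← Real.rpow_natCast, ← Real.rpow_neg (by linarith)]
  refine Real.rpow_le_rpow_of_exponent_le hb ?_
  rw [← add_div, le_div_iff₀ hdR]
  nlinarith

theorem dispersion_rate_general
    {d b t : ℕ} (hd : 0 < d) (hb : 2 ≤ b)
    (u : ℕ → Fin d → ℝ) (hu : IsTSeq b t u)
    (κ : (Fin d → ℝ) → (Fin d → ℝ) → ℝ)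
    (Klow : ℝ) (hA2 : A2 κ Klow)
    (G : (Fin d → ℝ) → (Fin d → ℝ) → (Fin d → ℝ)) (hG : IsInvRos κ G)
    (CK : ℝ) (hCK : 0 < CK)
    (hLip : ∀ x ∈ cube d, ∀ y ∈ cube d, ∀ x' ∈ cube d, ∀ y' ∈ cube d,
      ‖Ros κ x y - Ros κ x' y'‖ ≤ CK * max ‖x - x'‖ ‖y - y'‖) :
    ∃ C : ℝ, ∃ k0 : ℕ, ∀ k : ℕ, k0 ≤ k →
      ∀ xt ∈ cube d, ∀ xx ∈ cube d, ∃ n : ℕ, n < b ^ k ∧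
        ‖G xt (u n) - xx‖ ≤ C * (b : ℝ) ^ (-(k : ℝ) / (d : ℝ)) := by
  obtain ⟨M, hM⟩ := hA2.exists_bound
  have hρ : 0 < Klow / M := div_pos hA2.2.1 (hA2.pos_of_forall_le hM)
  refine ⟨(1 + CK / (Klow / M)) ^ d / (Klow / M) * (b : ℝ) ^ (((t : ℝ) + d) / d), t,
    fun k hk xt hxt xx hxx => ?_⟩
  obtain ⟨n, hn, hnear⟩ := hu.exists_norm_sub_le hd (by omega) hk (hA2.Ros_mem_cube hM hxt hxx)
  obtain ⟨hGmem, hGRos⟩ := hG xt hxt (u n) fun i => Ico_subset_Icc_self (hu.1 n i)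
  have hlip : ∀ y ∈ cube d, ∀ y' ∈ cube d, ‖Ros κ xt y - Ros κ xt y'‖ ≤ CK * ‖y - y'‖ :=
    fun y hy y' hy' => by simpa using hLip xt hxt y hy xt hxt y' hy'
  refine ⟨n, hn, ?_⟩
  calc ‖G xt (u n) - xx‖
      ≤ (1 + CK / (Klow / M)) ^ d / (Klow / M) * ‖Ros κ xt (G xt (u n)) - Ros κ xt xx‖ :=
        hA2.norm_sub_le_norm_Ros_sub hM hxt hCK.le hlip hGmem hxx
    _ ≤ (1 + CK / (Klow / M)) ^ d / (Klow / M) * (1 / (b : ℝ) ^ ((k - t) / d)) := by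
        rw [hGRos]; gcongr
    _ ≤ (1 + CK / (Klow / M)) ^ d / (Klow / M)
          * ((b : ℝ) ^ (((t : ℝ) + d) / d) * (b : ℝ) ^ (-(k : ℝ) / d)) := by
        gcongr
        exact one_div_pow_div_le_rpow (by exact_mod_cast (by omega : 1 ≤ b)) hd hk
    _ = _ := by ring

/-- **Dispersion rate corollary.** Under (A1)-(A2) and a Lipschitz Rosenblatt transform, the
dispersion `d_X(k, x̃)` is `O(b^{-k/d})`, uniformly in `x̃ ∈ X`. -/
theorem dispersion_rate
    {d b t : ℕ} (hd : 0 < d) (hb : 2 ≤ b)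
    (u : ℕ → Fin d → ℝ) (hu : IsTSeq b t u)
    (κ : (Fin d → ℝ) → (Fin d → ℝ) → ℝ) (hκ : IsMarkovDensity κ)
    (hA1 : A1 κ) (Klow : ℝ) (hA2 : A2 κ Klow)
    (G : (Fin d → ℝ) → (Fin d → ℝ) → (Fin d → ℝ)) (hG : IsInvRos κ G)
    (CK : ℝ) (hCK : 0 < CK)
    (hLip : ∀ x ∈ cube d, ∀ y ∈ cube d, ∀ x' ∈ cube d, ∀ y' ∈ cube d,
      ‖Ros κ x y - Ros κ x' y'‖ ≤ CK * max ‖x - x'‖ ‖y - y'‖) :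
    ∃ C : ℝ, ∃ k0 : ℕ, ∀ k : ℕ, k0 ≤ k →
      ∀ xt ∈ cube d, ∀ xx ∈ cube d, ∃ n : ℕ, n < b ^ k ∧
        ‖G xt (u n) - xx‖ ≤ C * (b : ℝ) ^ (-(k : ℝ) / (d : ℝ)) :=
  dispersion_rate_general hd hb u hu κ Klow hA2 G hG CK hCK hLip
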